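/- The four operators L_n, U_n∘L_n, L_n∘U_n, U_n are fully ordered: for every f : ℤ^d → ℝ and x ∈ ℤ^d, L_n f(x) ≤ (U_n∘L_n)(f)(x) ≤ (L_n∘U_n)(f)(x) ≤ U_n f(x). -/
import Mathlib


open Set

/-- A connection (connected class) on `ℤ^d`. -/
def IsConnection {d : ℕ} (C : Set (Set (Fin d → ℤ))) : Prop :=
  ∅ ∈ C ∧ (∀ x : Fin d → ℤ, {x} ∈ C) ∧
    ∀ S : Set (Set (Fin d → ℤ)), (∀ A ∈ S, A ∈ C) → (⋂₀ S).Nonempty → ⋃₀ S ∈ C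

/-- A connection on `ℤ^d` satisfying the additional axioms (α), (β), (γ). -/
def GoodConnection {d : ℕ} (C : Set (Set (Fin d → ℤ))) : Prop :=
  IsConnection C ∧
  Set.univ ∈ C ∧
  (∀ (a : Fin d → ℤ), ∀ V ∈ C, (fun x => a + x) '' V ∈ C) ∧
  (∀ V ∈ C, ∀ W ∈ C, V ⊂ W → ∃ x ∈ W \ V, insert x V ∈ C)

/-- `𝒩_n(x)`: the connected sets of cardinality `n+1` containing `x`. -/
def Nn {d : ℕ} (C : Set (Set (Fin d → ℤ))) (n : ℕ) (x : Fin d → ℤ) :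
    Set (Set (Fin d → ℤ)) :=
  {V | V ∈ C ∧ x ∈ V ∧ V.encard = (n : ℕ∞) + 1}

/-- The operator `L_n`. -/
noncomputable def Ln {d : ℕ} (C : Set (Set (Fin d → ℤ))) (n : ℕ)
    (f : (Fin d → ℤ) → ℝ) (x : Fin d → ℤ) : ℝ :=
  sSup ((fun V => sInf (f '' V)) '' Nn C n x)

/-- The operator `U_n`. -/
noncomputable def Un {d : ℕ} (C : Set (Set (Fin d → ℤ))) (n : ℕ)
    (f : (Fin d → ℤ) → ℝ) (x : Fin d → ℤ) : ℝ :=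
  sInf ((fun V => sSup (f '' V)) '' Nn C n x)

/-- The set of points adjacent to `V`. -/
def adjSet {d : ℕ} (C : Set (Set (Fin d → ℤ))) (V : Set (Fin d → ℤ)) :
    Set (Fin d → ℤ) :=
  {x | x ∉ V ∧ insert x V ∈ C}

/-- `V` is a local maximum set of `f`. -/
def IsLocalMaxSet {d : ℕ} (C : Set (Set (Fin d → ℤ))) (f : (Fin d → ℤ) → ℝ)
    (V : Set (Fin d → ℤ)) : Prop :=
  V ∈ C ∧ V.Finite ∧ V.Nonempty ∧ ∀ y ∈ adjSet C V, ∀ z ∈ V, f y < f z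

/-- `V` is a local minimum set of `f`. -/
def IsLocalMinSet {d : ℕ} (C : Set (Set (Fin d → ℤ))) (f : (Fin d → ℤ) → ℝ)
    (V : Set (Fin d → ℤ)) : Prop :=
  V ∈ C ∧ V.Finite ∧ V.Nonempty ∧ ∀ y ∈ adjSet C V, ∀ z ∈ V, f z < f y

section LULUAux

variable {d : ℕ} {C : Set (Set (Fin d → ℤ))}

lemma pair_union_mem (hC : GoodConnection C) {A B : Set (Fin d → ℤ)}
    (hA : A ∈ C) (hB : B ∈ C) (hAB : (A ∩ B).Nonempty) : A ∪ B ∈ C := by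
  have h := hC.1.2.2 {A, B} (by rintro S (rfl | rfl) <;> assumption) ?_
  · simpa [Set.sUnion_pair] using h
  · obtain ⟨p, hpA, hpB⟩ := hAB
    exact ⟨p, by rintro S (rfl | rfl) <;> assumption⟩

/-- The connected component of `u` inside `X`. -/
def comp (C : Set (Set (Fin d → ℤ))) (X : Set (Fin d → ℤ)) (u : Fin d → ℤ) :
    Set (Fin d → ℤ) :=
  ⋃₀ {S | S ∈ C ∧ u ∈ S ∧ S ⊆ X}

lemma comp_mem (hC : GoodConnection C) (X : Set (Fin d → ℤ)) (u : Fin d → ℤ) :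
    comp C X u ∈ C :=
  hC.1.2.2 _ (fun _ hA => hA.1) ⟨u, fun _ hS => hS.2.1⟩

lemma comp_subset (X : Set (Fin d → ℤ)) (u : Fin d → ℤ) : comp C X u ⊆ X :=
  sUnion_subset fun _ hS => hS.2.2

lemma mem_comp_self (hC : GoodConnection C) {X : Set (Fin d → ℤ)} {u : Fin d → ℤ}
    (hu : u ∈ X) : u ∈ comp C X u :=
  ⟨{u}, ⟨hC.1.2.1 u, rfl, singleton_subset_iff.2 hu⟩, rfl⟩

lemma subset_comp {X S : Set (Fin d → ℤ)} {u : Fin d → ℤ}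
    (hS : S ∈ C) (hu : u ∈ S) (hSX : S ⊆ X) : S ⊆ comp C X u :=
  subset_sUnion_of_mem ⟨hS, hu, hSX⟩

lemma grow (hC : GoodConnection C) {V W : Set (Fin d → ℤ)} (hV : V ∈ C) (hW : W ∈ C)
    (hVW : V ⊆ W) (hfin : V.Finite) (m : ℕ) (hm : V.encard + m ≤ W.encard) :
    ∃ V' ∈ C, V ⊆ V' ∧ V' ⊆ W ∧ V'.Finite ∧ V'.encard = V.encard + m := by
  induction m with
  | zero => exact ⟨V, hV, subset_rfl, hVW, hfin, by simp⟩
  | succ k ih =>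
    obtain ⟨V', hV'C, hVV', hV'W, hV'fin, hcard⟩ := ih (le_trans (by
      gcongr; exact_mod_cast Nat.le_succ k) hm)
    obtain ⟨c, hc⟩ : ∃ c : ℕ, V.encard = c :=
      ⟨hfin.toFinset.card, hfin.encard_eq_coe_toFinset_card⟩
    have hlt : V'.encard < V.encard + (k + 1 : ℕ) := by
      rw [hcard, hc]
      exact_mod_cast (by omega : c + k < c + (k+1))
    have hne : V' ≠ W := by
      rintro rfl
      exact absurd hm (not_le.2 hlt)
    obtain ⟨q, hq, hins⟩ := hC.2.2.2 V' hV'C W hW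
      (ssubset_iff_subset_ne.2 ⟨hV'W, hne⟩)
    refine ⟨insert q V', hins, hVV'.trans (subset_insert _ _),
      insert_subset hq.1 hV'W, hV'fin.insert q, ?_⟩
    rw [Set.encard_insert_of_notMem hq.2, hcard]
    push_cast
    ring

end LULUAux
section LULUAux2

variable {d : ℕ} {C : Set (Set (Fin d → ℤ))} {n : ℕ} {x : Fin d → ℤ}
  {f : (Fin d → ℤ) → ℝ}

lemma exists_Nn_subset (hC : GoodConnection C) {K : Set (Fin d → ℤ)} (hK : K ∈ C)
    (hx : x ∈ K) (n : ℕ) (hcard : (n : ℕ∞) + 1 ≤ K.encard) :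
    ∃ V ∈ Nn C n x, V ⊆ K := by
  obtain ⟨V', h1, h2, h3, h4, h5⟩ := grow hC (hC.1.2.1 x) hK
    (singleton_subset_iff.2 hx) (finite_singleton x) n
    (by rw [Set.encard_singleton, add_comm]; exact hcard)
  exact ⟨V', ⟨h1, h2 rfl, by rw [h5, Set.encard_singleton, add_comm]⟩, h3⟩

lemma Nn_nonempty (hd : 1 ≤ d) (hC : GoodConnection C) : (Nn C n x).Nonempty := by
  have : Infinite (Fin d → ℤ) :=
    Infinite.of_injective (fun k => fun _ => k) (fun a b h => by simpa using congrFun h ⟨0, hd⟩)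
  obtain ⟨V, hV, -⟩ := exists_Nn_subset hC hC.2.1 (mem_univ x) n
    (by rw [Set.infinite_univ.encard_eq]; exact le_top)
  exact ⟨V, hV⟩

lemma Nn_finite {V : Set (Fin d → ℤ)} (hV : V ∈ Nn C n x) : V.Finite := by
  rw [← Set.encard_lt_top_iff, hV.2.2]
  exact_mod_cast lt_of_le_of_lt (le_refl _) (by exact_mod_cast (WithTop.coe_lt_top (n+1) : ((n+1:ℕ):ℕ∞) < ⊤) : ((n:ℕ∞)+1) < ⊤)

lemma Nn_mem_self {V : Set (Fin d → ℤ)} (hV : V ∈ Nn C n x) : x ∈ V := hV.2.1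

lemma bddAbove_Ln : BddAbove ((fun V => sInf (f '' V)) '' Nn C n x) := by
  refine ⟨f x, ?_⟩
  rintro _ ⟨V, hV, rfl⟩
  exact csInf_le ((Nn_finite hV).image f).bddBelow ⟨x, hV.2.1, rfl⟩

lemma bddBelow_Un : BddBelow ((fun V => sSup (f '' V)) '' Nn C n x) := by
  refine ⟨f x, ?_⟩
  rintro _ ⟨V, hV, rfl⟩
  exact le_csSup ((Nn_finite hV).image f).bddAbove ⟨x, hV.2.1, rfl⟩

lemma Ln_le_self (hd : 1 ≤ d) (hC : GoodConnection C) : Ln C n f x ≤ f x :=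
  csSup_le ((Nn_nonempty hd hC).image _)
    (by rintro _ ⟨V, hV, rfl⟩; exact csInf_le ((Nn_finite hV).image f).bddBelow ⟨x, hV.2.1, rfl⟩)

lemma self_le_Un (hd : 1 ≤ d) (hC : GoodConnection C) : f x ≤ Un C n f x :=
  le_csInf ((Nn_nonempty hd hC).image _)
    (by rintro _ ⟨V, hV, rfl⟩; exact le_csSup ((Nn_finite hV).image f).bddAbove ⟨x, hV.2.1, rfl⟩)

lemma le_Ln {V : Set (Fin d → ℤ)} (hV : V ∈ Nn C n x) : sInf (f '' V) ≤ Ln C n f x :=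
  le_csSup bddAbove_Ln ⟨V, hV, rfl⟩

lemma Un_le {V : Set (Fin d → ℤ)} (hV : V ∈ Nn C n x) : Un C n f x ≤ sSup (f '' V) :=
  csInf_le bddBelow_Un ⟨V, hV, rfl⟩

end LULUAux2
section LULUMain

variable {d : ℕ} {C : Set (Set (Fin d → ℤ))}

lemma middle_ineq (hd : 1 ≤ d) (hC : GoodConnection C) (n : ℕ)
    (f : (Fin d → ℤ) → ℝ) (x : Fin d → ℤ) :
    Un C n (Ln C n f) x ≤ Ln C n (Un C n f) x := by
  have hinf : Infinite (Fin d → ℤ) :=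
    Infinite.of_injective (fun k => fun _ => k) (fun a b h => by simpa using congrFun h ⟨0, hd⟩)
  by_contra hcon
  push_neg at hcon
  obtain ⟨s, hs1, hs2⟩ := exists_between hcon
  set X : Set (Fin d → ℤ) := {u | s < f u} with hX
  set Y : Set (Fin d → ℤ) := {u | f u < s} with hY
  have h1 : ∀ V ∈ Nn C n x, ∃ y ∈ V, s < f y ∧ (n:ℕ∞)+1 ≤ (comp C X y).encard := by
    intro V hV
    have hVfin := Nn_finite hV
    have hsup : s < sSup (Ln C n f '' V) := lt_of_lt_of_le hs2 (Un_le hV)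
    have hne : (Ln C n f '' V).Nonempty := ⟨_, ⟨x, hV.2.1, rfl⟩⟩
    obtain ⟨y, hyV, hyeq⟩ := hne.csSup_mem (hVfin.image _)
    rw [← hyeq] at hsup
    have hex : ∃ A ∈ Nn C n y, s < sInf (f '' A) := by
      by_contra hA
      push_neg at hA
      exact absurd hsup (not_lt.2 (csSup_le ((Nn_nonempty hd hC).image _)
        (by rintro _ ⟨A, hAm, rfl⟩; exact hA A hAm)))
    obtain ⟨A, hA, hAs⟩ := hex
    have hAX : A ⊆ X := fun a ha =>
      lt_of_lt_of_le hAs (csInf_le ((Nn_finite hA).image f).bddBelow ⟨a, ha, rfl⟩)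
    refine ⟨y, hyV, hAX hA.2.1, ?_⟩
    rw [← hA.2.2]
    exact Set.encard_mono (subset_comp hA.1 hA.2.1 hAX)
  have h2 : ∀ V ∈ Nn C n x, ∃ z ∈ V, f z < s ∧ (n:ℕ∞)+1 ≤ (comp C Y z).encard := by
    intro V hV
    have hVfin := Nn_finite hV
    have hsup : sInf (Un C n f '' V) < s := lt_of_le_of_lt (le_Ln hV) hs1
    have hne : (Un C n f '' V).Nonempty := ⟨_, ⟨x, hV.2.1, rfl⟩⟩
    obtain ⟨z, hzV, hzeq⟩ := hne.csInf_mem (hVfin.image _)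
    rw [← hzeq] at hsup
    have hex : ∃ B ∈ Nn C n z, sSup (f '' B) < s := by
      by_contra hB
      push_neg at hB
      exact absurd hsup (not_lt.2 (le_csInf ((Nn_nonempty hd hC).image _)
        (by rintro _ ⟨B, hBm, rfl⟩; exact hB B hBm)))
    obtain ⟨B, hB, hBs⟩ := hex
    have hBY : B ⊆ Y := fun b hb =>
      lt_of_le_of_lt (le_csSup ((Nn_finite hB).image f).bddAbove ⟨b, hb, rfl⟩) hBs
    refine ⟨z, hzV, hBY hB.2.1, ?_⟩
    rw [← hB.2.2]
    exact Set.encard_mono (subset_comp hB.1 hB.2.1 hBY)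
  have killX : ∀ K ∈ C, x ∈ K → (n:ℕ∞)+1 ≤ K.encard →
      (∀ u ∈ K, s < f u → ¬ ((n:ℕ∞)+1 ≤ (comp C X u).encard)) → False := by
    intro K hK hxK hcard hdisj
    obtain ⟨V, hV, hVK⟩ := exists_Nn_subset hC hK hxK n hcard
    obtain ⟨y, hyV, hy1, hy2⟩ := h1 V hV
    exact hdisj y (hVK hyV) hy1 hy2
  have killY : ∀ K ∈ C, x ∈ K → (n:ℕ∞)+1 ≤ K.encard →
      (∀ u ∈ K, f u < s → ¬ ((n:ℕ∞)+1 ≤ (comp C Y u).encard)) → False := by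
    intro K hK hxK hcard hdisj
    obtain ⟨V, hV, hVK⟩ := exists_Nn_subset hC hK hxK n hcard
    obtain ⟨z, hzV, hz1, hz2⟩ := h2 V hV
    exact hdisj z (hVK hzV) hz1 hz2
  set allowed : Set (Fin d → ℤ) := {u | f u = s ∨ (s < f u ∧ (comp C X u).encard ≤ n)
    ∨ (f u < s ∧ (comp C Y u).encard ≤ n)} with hallowed
  have hn1n : ¬ ((n:ℕ∞)+1 ≤ (n:ℕ∞)) := by exact_mod_cast Nat.not_succ_le_self n
  have notBX : ∀ u ∈ allowed, s < f u → ¬ ((n:ℕ∞)+1 ≤ (comp C X u).encard) := by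
    rintro u (h | ⟨_, hle⟩ | ⟨hlt, _⟩) hs hbig
    · rw [h] at hs; exact lt_irrefl s hs
    · exact hn1n (le_trans hbig hle)
    · exact absurd hs (not_lt.2 hlt.le)
  have notBY : ∀ u ∈ allowed, f u < s → ¬ ((n:ℕ∞)+1 ≤ (comp C Y u).encard) := by
    rintro u (h | ⟨hgt, _⟩ | ⟨_, hle⟩) hs hbig
    · rw [h] at hs; exact lt_irrefl s hs
    · exact absurd hs (not_lt.2 hgt.le)
    · exact hn1n (le_trans hbig hle)
  have hx_allowed : x ∈ allowed := by
    rcases lt_trichotomy (f x) s with h | h | h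
    · rcases le_or_gt ((comp C Y x).encard) n with hsm | hb
      · exact Or.inr (Or.inr ⟨h, hsm⟩)
      · exact absurd (fun u hu hus _ => absurd hus
          (not_lt.2 (le_of_lt (comp_subset Y x hu))))
          (fun hd' => killX (comp C Y x) (comp_mem hC Y x) (mem_comp_self hC h)
            (Order.add_one_le_of_lt hb) hd')
    · exact Or.inl h
    · rcases le_or_gt ((comp C X x).encard) n with hsm | hb
      · exact Or.inr (Or.inl ⟨h, hsm⟩)
      · exact absurd (fun u hu hus _ => absurd hus
          (not_lt.2 (le_of_lt (comp_subset X x hu))))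
          (fun hd' => killY (comp C X x) (comp_mem hC X x) (mem_comp_self hC h)
            (Order.add_one_le_of_lt hb) hd')
  set T := ⋃₀ {S | S ∈ C ∧ x ∈ S ∧ S ⊆ allowed} with hT
  have hTC : T ∈ C := hC.1.2.2 _ (fun _ hA => hA.1) ⟨x, fun _ hS => hS.2.1⟩
  have hxT : x ∈ T := ⟨{x}, ⟨hC.1.2.1 x, rfl, singleton_subset_iff.2 hx_allowed⟩, rfl⟩
  have hTsub : T ⊆ allowed := sUnion_subset fun _ hS => hS.2.2
  rcases le_or_gt ((n:ℕ∞)+1) T.encard with hbig | hsmall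
  · exact killX T hTC hxT hbig (fun u hu => notBX u (hTsub hu))
  · have hTne : T ≠ univ := by
      intro hTeq
      rw [hTeq, Set.infinite_univ.encard_eq] at hsmall
      exact absurd hsmall (by simp)
    obtain ⟨q, hq, hins⟩ := hC.2.2.2 T hTC univ hC.2.1
      (ssubset_iff_subset_ne.2 ⟨subset_univ T, hTne⟩)
    have hq_not : q ∉ allowed := fun hqa =>
      hq.2 ⟨insert q T, ⟨hins, mem_insert_of_mem q hxT, insert_subset hqa hTsub⟩,
        mem_insert q T⟩
    rcases lt_trichotomy (f q) s with h | h | h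
    · have hbigq : (n:ℕ∞)+1 ≤ (comp C Y q).encard := by
        rcases le_or_gt ((comp C Y q).encard) n with hsm | hb
        · exact absurd (Or.inr (Or.inr ⟨h, hsm⟩)) hq_not
        · exact Order.add_one_le_of_lt hb
      refine killX (insert q T ∪ comp C Y q)
        (pair_union_mem hC hins (comp_mem hC Y q) ⟨q, mem_insert q T, mem_comp_self hC h⟩)
        (mem_union_left _ (mem_insert_of_mem q hxT))
        (le_trans hbigq (Set.encard_mono subset_union_right)) ?_
      rintro u (hu | hu) hus hbigu
      · rcases hu with rfl | hu
        · exact absurd hus (not_lt.2 h.le)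
        · exact notBX u (hTsub hu) hus hbigu
      · exact absurd hus (not_lt.2 (le_of_lt (comp_subset Y q hu)))
    · exact hq_not (Or.inl h)
    · have hbigq : (n:ℕ∞)+1 ≤ (comp C X q).encard := by
        rcases le_or_gt ((comp C X q).encard) n with hsm | hb
        · exact absurd (Or.inr (Or.inl ⟨h, hsm⟩)) hq_not
        · exact Order.add_one_le_of_lt hb
      refine killY (insert q T ∪ comp C X q)
        (pair_union_mem hC hins (comp_mem hC X q) ⟨q, mem_insert q T, mem_comp_self hC h⟩)
        (mem_union_left _ (mem_insert_of_mem q hxT))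
        (le_trans hbigq (Set.encard_mono subset_union_right)) ?_
      rintro u (hu | hu) hus hbigu
      · rcases hu with rfl | hu
        · exact absurd hus (not_lt.2 h.le)
        · exact notBY u (hTsub hu) hus hbigu
      · exact absurd hus (not_lt.2 (le_of_lt (comp_subset X q hu)))

end LULUMain
/-- the four operators are fully ordered:
`L_n ≤ U_n∘L_n ≤ L_n∘U_n ≤ U_n`. -/
theorem LULU_fully_ordered {d : ℕ} (hd : 1 ≤ d)
    (C : Set (Set (Fin d → ℤ))) (hC : GoodConnection C)
    (hadj : ∀ V ∈ C, V.Finite → (adjSet C V).Finite)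
    (n : ℕ) (hn : 1 ≤ n) (f : (Fin d → ℤ) → ℝ) (x : Fin d → ℤ) :
    Ln C n f x ≤ Un C n (Ln C n f) x ∧
    Un C n (Ln C n f) x ≤ Ln C n (Un C n f) x ∧
    Ln C n (Un C n f) x ≤ Un C n f x :=
  ⟨self_le_Un hd hC, middle_ineq hd hC n f x, Ln_le_self hd hC⟩
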